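/- Let n ≥ 2, let s : Fin n → ℝ be injective, let ỹ : Fin n → ℝ be a bijection onto {1, 2, …, n}, and define r̂_i = 1 + #{j ≠ i : s_i < s_j}. Then Σ_{i=1}^{n} r̂_i ỹ_i = n(n+1)(2n+1)/6 − Σ_{(i,j) : ỹ_i < ỹ_j} (ỹ_j − ỹ_i)·[s_i < s_j], where the sum is over all ordered pairs (i, j) with ỹ_i < ỹ_j and [P] is the indicator equal to 1 if P holds and 0 otherwise. -/

import Mathlib

/-!
Since `ỹ` is a permutation of `1, …, n`, it is its own rank vector: `ỹ_i = 1 + #{j | ỹ_j < ỹ_i}`.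
Hence `∑ ỹ_i²` and `∑ r̂_i ỹ_i` are both `∑ ỹ_i` plus a sum of `ỹ_i` over ordered pairs, ordered by
`ỹ` and by `s` respectively. On an unordered pair `{i, j}` with `ỹ_i < ỹ_j` the first pair sum
contributes `ỹ_j`, the second `ỹ_i` if `s_i < s_j` and `ỹ_j` otherwise; pairing `(i, j)` with
`(j, i)` turns this into an identity of sums over all ordered pairs.
-/
open Finset Function

theorem Finset.sum_range_add_one_sq (n : ℕ) :
    ∑ k ∈ range n, ((k : ℝ) + 1) ^ 2 = (n : ℝ) * (n + 1) * (2 * n + 1) / 6 := by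
  induction n with
  | zero => simp
  | succ m ih =>
    rw [sum_range_succ, ih]
    push_cast
    ring

theorem Equiv.Perm.card_filter_apply_lt_apply {n : ℕ} (σ : Equiv.Perm (Fin n)) (i : Fin n) :
    #{j | σ j < σ i} = σ i := by
  calc #{j | σ j < σ i} = #{k | k < σ i} := card_equiv σ (by simp)
    _ = σ i := by rw [filter_gt_eq_Iio, Fin.card_Iio]

section PairSums

variable {ι : Type*} [Fintype ι]

theorem sum_card_filter_mul {R : Type*} [Semiring R] (r : ι → ι → Prop) [DecidableRel r]
    (f : ι → R) :
    ∑ i, (#{j | r i j} : R) * f i = ∑ p ∈ univ.filter (fun p : ι × ι => r p.1 p.2), f p.1 := by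
  rw [sum_filter, Fintype.sum_prod_type]
  refine sum_congr rfl fun i _ => ?_
  simp only [← sum_filter, sum_const, nsmul_eq_mul]

variable {α R : Type*} [LinearOrder α] [AddCommGroup R] [LinearOrder R]

theorem sum_filter_lt_eq_sub_sum_discordant {s : ι → α} (hs : Injective s) {y : ι → R}
    (hy : Injective y) :
    ∑ p ∈ univ.filter (fun p : ι × ι => s p.1 < s p.2), y p.1
      = ∑ p ∈ univ.filter (fun p : ι × ι => y p.2 < y p.1), y p.1
        - ∑ p ∈ univ.filter (fun p : ι × ι => y p.1 < y p.2),
            if s p.1 < s p.2 then y p.2 - y p.1 else 0 := by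
  rw [eq_sub_iff_add_eq, ← sub_eq_zero]
  simp only [sum_filter, ← sum_add_distrib, ← sum_sub_distrib]
  refine sum_ninvolution Prod.swap (fun ⟨i, j⟩ => ?_) (fun ⟨i, j⟩ h hij => h ?_)
    (fun _ => mem_univ _) Prod.swap_swap
  · rcases eq_or_ne i j with rfl | hij
    · simp
    rcases (hy.ne hij).lt_or_gt with hy' | hy' <;> rcases (hs.ne hij).lt_or_gt with hs' | hs' <;>
      simp [hy', hs', hy'.not_gt, hs'.not_gt]
  · obtain rfl : j = i := congrArg Prod.fst hij
    simp

end PairSums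

theorem rank_inner_product_formula_general (n : ℕ) (s : Fin n → ℝ)
    (hs : Function.Injective s) (y : Fin n → ℝ)
    (hy : ∃ σ : Equiv.Perm (Fin n), ∀ i, y i = ((σ i : ℕ) : ℝ) + 1) :
    (∑ i, (1 + ((univ.filter fun j => j ≠ i ∧ s i < s j).card : ℝ)) * y i)
      = (n : ℝ) * ((n : ℝ) + 1) * (2 * (n : ℝ) + 1) / 6
          - ∑ p ∈ univ.filter fun p : Fin n × Fin n => y p.1 < y p.2,
              (y p.2 - y p.1) * (if s p.1 < s p.2 then (1 : ℝ) else 0) := by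
  obtain ⟨σ, hσ⟩ := hy
  have hy_inj : Injective y := fun i j h => σ.injective <| Fin.ext <| by
    simpa [hσ] using h
  have hy_rank (i : Fin n) : 1 + (#{j | y j < y i} : ℝ) = y i := by
    simp only [hσ, add_lt_add_iff_right, Nat.cast_lt, Fin.val_fin_lt,
      σ.card_filter_apply_lt_apply]
    ring
  have hy_sq : ∑ i, y i * y i = (n : ℝ) * (n + 1) * (2 * n + 1) / 6 := by
    simp only [hσ, ← sq]
    rw [Equiv.sum_comp σ (fun k => (((k : ℕ) : ℝ) + 1) ^ 2), Fin.sum_univ_eq_sum_range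
      (fun k => ((k : ℝ) + 1) ^ 2), sum_range_add_one_sq]
  have h_ne (i : Fin n) :
      (univ.filter fun j => j ≠ i ∧ s i < s j) = univ.filter fun j => s i < s j :=
    filter_congr fun j _ => and_iff_right_of_imp fun h hji => (hji ▸ h).false
  calc _ = ∑ i, y i + ∑ p ∈ univ.filter (fun p : Fin n × Fin n => s p.1 < s p.2), y p.1 := by
        simp only [h_ne, add_mul, one_mul, sum_add_distrib, sum_card_filter_mul]
    _ = ∑ i, (1 + (#{j | y j < y i} : ℝ)) * y i
          - ∑ p ∈ univ.filter (fun p : Fin n × Fin n => y p.1 < y p.2),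
            if s p.1 < s p.2 then y p.2 - y p.1 else 0 := by
        simp only [sum_filter_lt_eq_sub_sum_discordant hs hy_inj, add_mul, one_mul,
          sum_add_distrib, sum_card_filter_mul, add_sub_assoc]
    _ = _ := by simp only [hy_rank, hy_sq, mul_boole]

/-- Key intermediate formula in the proof of Proposition 2: the rank inner product
equals `n(n+1)(2n+1)/6` minus the discordant-pair sum. -/
theorem rank_inner_product_formula (n : ℕ) (hn : 2 ≤ n) (s : Fin n → ℝ)
    (hs : Function.Injective s) (y : Fin n → ℝ)
    (hy : ∃ σ : Equiv.Perm (Fin n), ∀ i, y i = ((σ i : ℕ) : ℝ) + 1) :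
    (∑ i, (1 + ((univ.filter fun j => j ≠ i ∧ s i < s j).card : ℝ)) * y i)
      = (n : ℝ) * ((n : ℝ) + 1) * (2 * (n : ℝ) + 1) / 6
          - ∑ p ∈ univ.filter fun p : Fin n × Fin n => y p.1 < y p.2,
              (y p.2 - y p.1) * (if s p.1 < s p.2 then (1 : ℝ) else 0) :=
  rank_inner_product_formula_general n s hs y hy
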